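/- If Z is finite, then the infinite-horizon safe set { z : lim_T V_T(z) ≥ 0 } (equivalently { z : V_T(z) ≥ 0 for all T }, since V_T is non-increasing in T) equals the maximal safe set Ω* defined by the existence of a policy avoiding F = { z : ℓ(z) < 0 } forever against all admissible adversary sequences. -/

import Mathlib

/-! Both sets are the largest controlled invariant subset of `{z | 0 ≤ ℓ z}`.
`0 ≤ V (T+1) z` says exactly that `0 ≤ ℓ z` and some action keeps `V T` nonnegative against every
admissible move; the sets of such actions decrease in `T`, so since `A` is finite one action works
for every `T`. A safe policy makes the set of states from which it is safe invariant, and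
conversely choosing an invariance action at each state of an invariant set gives a safe policy. -/

/-- Finite-horizon safety value:
`V 0 z = ℓ z`, `V (T+1) z = max_a min_{b ∈ Badm z} min (ℓ z) (V T (f z a b))`. -/
noncomputable def V {Z A B : Type*} [Fintype A] [Nonempty A]
    (f : Z → A → B → Z) (Badm : Z → Finset B) (hB : ∀ z, (Badm z).Nonempty)
    (ℓ : Z → ℝ) : ℕ → Z → ℝ
  | 0, z => ℓ z
  | T + 1, z =>
    Finset.univ.sup' Finset.univ_nonempty fun a : A =>
      (Badm z).inf' (hB z) fun b => min (ℓ z) (V f Badm hB ℓ T (f z a b))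

/-- Closed-loop trajectory under policy `π` and adversary sequence `b`. -/
def traj {Z A B : Type*} (f : Z → A → B → Z) (π : Z → A) (b : ℕ → B) (z0 : Z) : ℕ → Z
  | 0 => z0
  | t + 1 => f (traj f π b z0 t) (π (traj f π b z0 t)) (b t)

/-- The maximal safe set Ω* for failure set `{z | ℓ z < 0}`. -/
def SafeSet {Z A B : Type*} (f : Z → A → B → Z) (Badm : Z → Finset B) (F : Set Z) : Set Z :=
  {z0 | ∃ π : Z → A, ∀ b : ℕ → B,
    (∀ t, b t ∈ Badm (traj f π b z0 t)) → ∀ t, traj f π b z0 t ∉ F}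

lemma Finite.exists_forall_of_antitone {α : Type*} [Finite α] {P : ℕ → α → Prop}
    (hP : ∀ a, Antitone (P · a)) (h : ∀ n, ∃ a, P n a) : ∃ a, ∀ n, P n a := by
  obtain ⟨a, ha⟩ := Filter.frequently_exists.mp (Filter.Frequently.of_forall (f := .atTop) h)
  refine ⟨a, fun n => ?_⟩
  obtain ⟨m, hnm, hm⟩ := Filter.frequently_atTop.mp ha n
  exact hP a hnm hm

def IsControlledInvariant {Z A B : Type*} (f : Z → A → B → Z) (Badm : Z → Finset B)
    (S : Set Z) : Prop :=
  ∀ z ∈ S, ∃ a, ∀ b ∈ Badm z, f z a b ∈ S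

section Value

variable {Z A B : Type*} [Fintype A] [Nonempty A] {f : Z → A → B → Z} {Badm : Z → Finset B}
  {hB : ∀ z, (Badm z).Nonempty} {ℓ : Z → ℝ}

lemma V_succ_le (T : ℕ) (z : Z) : V f Badm hB ℓ (T + 1) z ≤ V f Badm hB ℓ T z := by
  induction T generalizing z with
  | zero =>
    obtain ⟨b, hb⟩ := hB z
    exact Finset.sup'_le _ _ fun a _ => (Finset.inf'_le _ hb).trans (min_le_left _ _)
  | succ T ih =>
    rw [V, V]
    gcongr with a _ b _
    exact ih _

lemma V_antitone (z : Z) : Antitone (V f Badm hB ℓ · z) :=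
  antitone_nat_of_succ_le fun T => V_succ_le T z

lemma zero_le_V_succ_iff {T : ℕ} {z : Z} :
    0 ≤ V f Badm hB ℓ (T + 1) z ↔ 0 ≤ ℓ z ∧ ∃ a, ∀ b ∈ Badm z, 0 ≤ V f Badm hB ℓ T (f z a b) := by
  simp only [V, Finset.le_sup'_iff, Finset.le_inf'_iff, le_min_iff, Finset.mem_univ, true_and,
    imp_and, forall_and, (hB z).forall_const, exists_and_left]

lemma isControlledInvariant_setOf_forall_zero_le_V :
    IsControlledInvariant f Badm {z | ∀ T, 0 ≤ V f Badm hB ℓ T z} := by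
  intro z hz
  have hact : ∀ T, ∃ a, ∀ b ∈ Badm z, 0 ≤ V f Badm hB ℓ T (f z a b) :=
    fun T => (zero_le_V_succ_iff.mp (hz (T + 1))).2
  obtain ⟨a, ha⟩ := Finite.exists_forall_of_antitone
    (fun a _ _ hTT' h b hb => (h b hb).trans (V_antitone _ hTT')) hact
  exact ⟨a, fun b hb T => ha T b hb⟩

lemma zero_le_V_of_isControlledInvariant {S : Set Z} (hS : IsControlledInvariant f Badm S)
    (hℓ : ∀ z ∈ S, 0 ≤ ℓ z) (T : ℕ) {z : Z} (hz : z ∈ S) : 0 ≤ V f Badm hB ℓ T z := by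
  induction T generalizing z with
  | zero => exact hℓ z hz
  | succ T ih =>
    obtain ⟨a, ha⟩ := hS z hz
    exact zero_le_V_succ_iff.mpr ⟨hℓ z hz, a, fun b hb => ih (ha b hb)⟩

end Value

section Trajectory

variable {Z A B : Type*} {f : Z → A → B → Z} {Badm : Z → Finset B}

lemma traj_cons (π : Z → A) (b₀ : B) (b : ℕ → B) (z : Z) (t : ℕ) :
    traj f π (Stream'.cons b₀ b) z (t + 1) = traj f π b (f z (π z) b₀) t := by
  induction t with
  | zero => rfl
  | succ t ih => exact congrArg (fun y => f y (π y) (b t)) ih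

lemma exists_admissible_adversary (hB : ∀ z, (Badm z).Nonempty) (π : Z → A) (z : Z) :
    ∃ b : ℕ → B, ∀ t, b t ∈ Badm (traj f π b z t) := by
  choose c hc using hB
  let step : Z → Z := fun z => f z (π z) (c z)
  have htraj : ∀ t, traj f π (fun t => c (step^[t] z)) z t = step^[t] z := by
    intro t
    induction t with
    | zero => rfl
    | succ t ih => rw [traj, ih, Function.iterate_succ_apply']
  exact ⟨fun t => c (step^[t] z), fun t => htraj t ▸ hc _⟩

lemma IsControlledInvariant.subset_safeSet {S F : Set Z} (hS : IsControlledInvariant f Badm S)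
    (hSF : S ⊆ Fᶜ) : S ⊆ SafeSet f Badm F := by
  classical
  choose act hact using hS
  intro z₀ hz₀
  let π : Z → A := fun z => if h : z ∈ S then act z h else act z₀ hz₀
  refine ⟨π, fun b hb t => hSF ?_⟩
  induction t with
  | zero => exact hz₀
  | succ t ih =>
    rw [traj, show π (traj f π b z₀ t) = act _ ih from dif_pos ih]
    exact hact _ ih _ (hb t)

lemma mem_safeSet_iff (hB : ∀ z, (Badm z).Nonempty) {F : Set Z} {z : Z} :
    z ∈ SafeSet f Badm F ↔ ∃ S, IsControlledInvariant f Badm S ∧ S ⊆ Fᶜ ∧ z ∈ S := by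
  refine ⟨fun ⟨π, hπ⟩ => ?_, fun ⟨S, hS, hSF, hzS⟩ => hS.subset_safeSet hSF hzS⟩
  refine ⟨{z | ∀ b : ℕ → B, (∀ t, b t ∈ Badm (traj f π b z t)) → ∀ t, traj f π b z t ∉ F},
    fun z hz => ⟨π z, fun b₀ hb₀ b hb t => ?_⟩, fun z hz => ?_, hπ⟩
  · have hadm : ∀ t, Stream'.cons b₀ b t ∈ Badm (traj f π (Stream'.cons b₀ b) z t)
      | 0 => hb₀
      | t + 1 => by rw [traj_cons]; exact hb t
    simpa only [traj_cons] using hz _ hadm (t + 1)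
  · obtain ⟨b, hb⟩ := exists_admissible_adversary hB π z
    exact hz b hb 0

end Trajectory

theorem infinite_horizon_value_safe_set_general {Z A B : Type*}
    [Fintype A] [Nonempty A]
    (f : Z → A → B → Z) (Badm : Z → Finset B) (hB : ∀ z, (Badm z).Nonempty)
    (ℓ : Z → ℝ) :
    {z | ∀ T : ℕ, 0 ≤ V f Badm hB ℓ T z} = SafeSet f Badm {z | ℓ z < 0} := by
  ext z
  rw [Set.mem_ofPred_eq, mem_safeSet_iff hB]
  constructor
  · exact fun hz => ⟨_, isControlledInvariant_setOf_forall_zero_le_V,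
      fun y hy => not_lt.mpr (hy 0), hz⟩
  · rintro ⟨S, hS, hSF, hzS⟩ T
    exact zero_le_V_of_isControlledInvariant hS (fun y hy => not_lt.mp (hSF hy)) T hzS

/-- Over a finite state space, the infinite-horizon safe set
`{z | ∀ T, V_T(z) ≥ 0}` equals the maximal safe set Ω*. -/
theorem infinite_horizon_value_safe_set {Z A B : Type*}
    [Fintype Z] [Fintype A] [Nonempty A]
    (f : Z → A → B → Z) (Badm : Z → Finset B) (hB : ∀ z, (Badm z).Nonempty)
    (ℓ : Z → ℝ) :
    {z | ∀ T : ℕ, 0 ≤ V f Badm hB ℓ T z} = SafeSet f Badm {z | ℓ z < 0} :=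
  infinite_horizon_value_safe_set_general f Badm hB ℓ
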